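/- arXiv:2408.02165 — 2 statements merged into one kernel-verified Lean document; each statement's English description precedes it below -/
import Mathlib

section
/- Performance difference lemma: for two policies π' and π on an MDP with discount γ ∈ [0,1), the difference in expected discounted returns satisfies J(π') − J(π) = 𝔼_{s∼ρ_{π'}, a∼π'(·|s)}[A_π(s,a)], where ρ_{π'}(s) = Σ_{t≥0} γᵗ P(s_t = s | π') is the unnormalized discounted state visitation frequency and A_π is the advantage function of π. -/
open scoped BigOperators

variable {S A : Type*} [Fintype S] [Fintype A] [DecidableEq S]

/-- One-step state transition matrix under a policy. -/
def stepMat (P : S → A → S → ℝ) (π : S → A → ℝ) (s s' : S) : ℝ :=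
  ∑ a, π s a * P s a s'

/-- State distribution at time `t` under policy `π`, starting from `d0`. -/
def distAt (P : S → A → S → ℝ) (π : S → A → ℝ) (d0 : S → ℝ) : ℕ → S → ℝ
  | 0 => d0
  | (t + 1) => fun s' => ∑ s, distAt P π d0 t s * stepMat P π s s'

/-- Unnormalized discounted state visitation frequencies
`ρ(s) = Σ_t γᵗ P(s_t = s | π)`, starting from `d0`. -/
noncomputable def visit (P : S → A → S → ℝ) (π : S → A → ℝ) (γ : ℝ)
    (d0 : S → ℝ) (s : S) : ℝ :=
  ∑' t : ℕ, γ ^ t * distAt P π d0 t s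

/-- Expected one-step reward of a policy at a state. -/
def rPol (r : S → A → ℝ) (π : S → A → ℝ) (s : S) : ℝ := ∑ a, π s a * r s a

/-- Value function: expected discounted return starting from state `s`. -/
noncomputable def Vval (P : S → A → S → ℝ) (r : S → A → ℝ) (π : S → A → ℝ)
    (γ : ℝ) (s : S) : ℝ :=
  ∑ s', visit P π γ (fun s'' => if s'' = s then 1 else 0) s' * rPol r π s'

/-- Action-value function. -/
noncomputable def Qval (P : S → A → S → ℝ) (r : S → A → ℝ) (π : S → A → ℝ)
    (γ : ℝ) (s : S) (a : A) : ℝ :=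
  r s a + γ * ∑ s', P s a s' * Vval P r π γ s'

/-- Advantage function `A_π = Q_π − V_π`. -/
noncomputable def Adv (P : S → A → S → ℝ) (r : S → A → ℝ) (π : S → A → ℝ)
    (γ : ℝ) (s : S) (a : A) : ℝ :=
  Qval P r π γ s a - Vval P r π γ s

/-- Expected discounted return `J(π)` from the initial distribution `ρ0`. -/
noncomputable def Jval (P : S → A → S → ℝ) (r : S → A → ℝ) (π : S → A → ℝ)
    (γ : ℝ) (ρ0 : S → ℝ) : ℝ :=
  ∑ s, ρ0 s * Vval P r π γ s

section aux

variable (P : S → A → S → ℝ) (μ : S → A → ℝ)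

lemma stepMat_nonneg (hP : ∀ s a s', 0 ≤ P s a s') (hμ : ∀ s a, 0 ≤ μ s a) (s s' : S) :
    0 ≤ stepMat P μ s s' :=
  Finset.sum_nonneg fun a _ => mul_nonneg (hμ s a) (hP s a s')

lemma stepMat_sum (hP_sum : ∀ s a, ∑ s', P s a s' = 1) (hμ_sum : ∀ s, ∑ a, μ s a = 1)
    (s : S) : ∑ s', stepMat P μ s s' = 1 := by
  unfold stepMat
  rw [Finset.sum_comm]
  simp [← Finset.mul_sum, hP_sum, hμ_sum]

lemma distAt_nonneg (hP : ∀ s a s', 0 ≤ P s a s') (hμ : ∀ s a, 0 ≤ μ s a)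
    (d0 : S → ℝ) (hd0 : ∀ s, 0 ≤ d0 s) : ∀ t s, 0 ≤ distAt P μ d0 t s
  | 0, s => hd0 s
  | (t+1), s => Finset.sum_nonneg fun s' _ =>
      mul_nonneg (distAt_nonneg hP hμ d0 hd0 t s') (stepMat_nonneg P μ hP hμ s' s)

lemma distAt_sum (hP_sum : ∀ s a, ∑ s', P s a s' = 1) (hμ_sum : ∀ s, ∑ a, μ s a = 1)
    (d0 : S → ℝ) : ∀ t, ∑ s, distAt P μ d0 t s = ∑ s, d0 s
  | 0 => rfl
  | (t+1) => by
      show ∑ s', ∑ s, distAt P μ d0 t s * stepMat P μ s s' = _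
      rw [Finset.sum_comm]
      simp only [← Finset.mul_sum, stepMat_sum P μ hP_sum hμ_sum, mul_one]
      exact distAt_sum hP_sum hμ_sum d0 t

lemma distAt_le_one (hP : ∀ s a s', 0 ≤ P s a s') (hP_sum : ∀ s a, ∑ s', P s a s' = 1)
    (hμ : ∀ s a, 0 ≤ μ s a) (hμ_sum : ∀ s, ∑ a, μ s a = 1)
    (d0 : S → ℝ) (hd0 : ∀ s, 0 ≤ d0 s) (hd0s : ∑ s, d0 s = 1) (t : ℕ) (s : S) :
    distAt P μ d0 t s ≤ 1 := by
  calc distAt P μ d0 t s ≤ ∑ s', distAt P μ d0 t s' :=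
        Finset.single_le_sum (fun s' _ => distAt_nonneg P μ hP hμ d0 hd0 t s')
          (Finset.mem_univ s)
    _ = 1 := by rw [distAt_sum P μ hP_sum hμ_sum, hd0s]

lemma summable_visit {γ : ℝ} (hγ0 : 0 ≤ γ) (hγ1 : γ < 1)
    (hP : ∀ s a s', 0 ≤ P s a s') (hP_sum : ∀ s a, ∑ s', P s a s' = 1)
    (hμ : ∀ s a, 0 ≤ μ s a) (hμ_sum : ∀ s, ∑ a, μ s a = 1)
    (d0 : S → ℝ) (hd0 : ∀ s, 0 ≤ d0 s) (hd0s : ∑ s, d0 s = 1) (s : S) :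
    Summable (fun t : ℕ => γ ^ t * distAt P μ d0 t s) := by
  apply Summable.of_nonneg_of_le
    (fun t => mul_nonneg (pow_nonneg hγ0 t) (distAt_nonneg P μ hP hμ d0 hd0 t s))
    (fun t => by
      have := distAt_le_one P μ hP hP_sum hμ hμ_sum d0 hd0 hd0s t s
      calc γ ^ t * distAt P μ d0 t s ≤ γ ^ t * 1 :=
            mul_le_mul_of_nonneg_left this (pow_nonneg hγ0 t)
        _ = γ ^ t := mul_one _)
    (summable_geometric_of_lt_one hγ0 hγ1)

lemma delta_nonneg (s0 : S) : ∀ s, 0 ≤ (fun s'' => if s'' = s0 then (1:ℝ) else 0) s :=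
  fun s => by dsimp; split <;> norm_num

lemma delta_sum (s0 : S) : ∑ s, (fun s'' => if s'' = s0 then (1:ℝ) else 0) s = 1 := by
  simp

lemma distAt_linear (d0 : S → ℝ) :
    ∀ t s, distAt P μ d0 t s
      = ∑ s0, d0 s0 * distAt P μ (fun s'' => if s'' = s0 then 1 else 0) t s
  | 0, s => by simp [distAt, eq_comm]
  | (t+1), s => by
      show ∑ s1, distAt P μ d0 t s1 * stepMat P μ s1 s = _
      have h : ∀ s1, distAt P μ d0 t s1
          = ∑ s0, d0 s0 * distAt P μ (fun s'' => if s'' = s0 then 1 else 0) t s1 :=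
        fun s1 => distAt_linear d0 t s1
      simp only [h, Finset.sum_mul]
      rw [Finset.sum_comm]
      refine Finset.sum_congr rfl fun s0 _ => ?_
      show _ = d0 s0 * ∑ s1, distAt P μ _ t s1 * stepMat P μ s1 s
      rw [Finset.mul_sum]
      refine Finset.sum_congr rfl fun s1 _ => by ring

lemma visit_linear {γ : ℝ} (hγ0 : 0 ≤ γ) (hγ1 : γ < 1)
    (hP : ∀ s a s', 0 ≤ P s a s') (hP_sum : ∀ s a, ∑ s', P s a s' = 1)
    (hμ : ∀ s a, 0 ≤ μ s a) (hμ_sum : ∀ s, ∑ a, μ s a = 1)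
    (d0 : S → ℝ) (s : S) :
    visit P μ γ d0 s
      = ∑ s0, d0 s0 * visit P μ γ (fun s'' => if s'' = s0 then 1 else 0) s := by
  unfold visit
  have hs : ∀ s0 : S, Summable (fun t : ℕ =>
      d0 s0 * (γ ^ t * distAt P μ (fun s'' => if s'' = s0 then 1 else 0) t s)) :=
    fun s0 => (summable_visit P μ hγ0 hγ1 hP hP_sum hμ hμ_sum _
      (delta_nonneg s0) (delta_sum s0) s).mul_left _
  calc (∑' t : ℕ, γ ^ t * distAt P μ d0 t s)
      = ∑' t : ℕ, ∑ s0, d0 s0 * (γ ^ t * distAt P μ (fun s'' => if s'' = s0 then 1 else 0) t s) := by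
        refine tsum_congr fun t => ?_
        rw [distAt_linear P μ d0 t s, Finset.mul_sum]
        exact Finset.sum_congr rfl fun s0 _ => by ring
    _ = ∑ s0, ∑' t : ℕ, d0 s0 * (γ ^ t * distAt P μ (fun s'' => if s'' = s0 then 1 else 0) t s) :=
        Summable.tsum_finsetSum (fun s0 _ => hs s0)
    _ = ∑ s0, d0 s0 * visit P μ γ (fun s'' => if s'' = s0 then 1 else 0) s := by
        refine Finset.sum_congr rfl fun s0 _ => ?_
        rw [tsum_mul_left]; rfl

lemma visit_flow {γ : ℝ} (hγ0 : 0 ≤ γ) (hγ1 : γ < 1)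
    (hP : ∀ s a s', 0 ≤ P s a s') (hP_sum : ∀ s a, ∑ s', P s a s' = 1)
    (hμ : ∀ s a, 0 ≤ μ s a) (hμ_sum : ∀ s, ∑ a, μ s a = 1)
    (d0 : S → ℝ) (hd0 : ∀ s, 0 ≤ d0 s) (hd0s : ∑ s, d0 s = 1) (s' : S) :
    visit P μ γ d0 s' = d0 s' + γ * ∑ s, visit P μ γ d0 s * stepMat P μ s s' := by
  unfold visit
  have hsum : Summable (fun t : ℕ => γ ^ t * distAt P μ d0 t s') :=
    summable_visit P μ hγ0 hγ1 hP hP_sum hμ hμ_sum d0 hd0 hd0s s'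
  rw [Summable.tsum_eq_zero_add hsum]
  congr 1
  · simp [distAt]
  have step1 : ∀ t : ℕ, γ ^ (t+1) * distAt P μ d0 (t+1) s'
      = ∑ s, γ * ((γ ^ t * distAt P μ d0 t s) * stepMat P μ s s') := by
    intro t
    show γ ^ (t+1) * ∑ s, distAt P μ d0 t s * stepMat P μ s s' = _
    rw [Finset.mul_sum]
    exact Finset.sum_congr rfl fun s _ => by ring
  calc (∑' t : ℕ, γ ^ (t+1) * distAt P μ d0 (t+1) s')
      = ∑' t : ℕ, ∑ s, γ * ((γ ^ t * distAt P μ d0 t s) * stepMat P μ s s') :=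
        tsum_congr step1
    _ = ∑ s, ∑' t : ℕ, γ * ((γ ^ t * distAt P μ d0 t s) * stepMat P μ s s') :=
        Summable.tsum_finsetSum (fun s _ =>
          (((summable_visit P μ hγ0 hγ1 hP hP_sum hμ hμ_sum d0 hd0 hd0s s).mul_right
            (stepMat P μ s s')).mul_left γ))
    _ = γ * ∑ s, (∑' t : ℕ, γ ^ t * distAt P μ d0 t s) * stepMat P μ s s' := by
        rw [Finset.mul_sum]
        refine Finset.sum_congr rfl fun s _ => ?_
        rw [tsum_mul_left, tsum_mul_right]

end aux

lemma Jval_alt (P : S → A → S → ℝ) (r : S → A → ℝ) (μ : S → A → ℝ) {γ : ℝ}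
    (hγ0 : 0 ≤ γ) (hγ1 : γ < 1)
    (hP : ∀ s a s', 0 ≤ P s a s') (hP_sum : ∀ s a, ∑ s', P s a s' = 1)
    (hμ : ∀ s a, 0 ≤ μ s a) (hμ_sum : ∀ s, ∑ a, μ s a = 1) (ρ0 : S → ℝ) :
    Jval P r μ γ ρ0 = ∑ s, visit P μ γ ρ0 s * rPol r μ s := by
  unfold Jval Vval
  calc ∑ s0, ρ0 s0 * ∑ s', visit P μ γ (fun s'' => if s'' = s0 then 1 else 0) s' * rPol r μ s'
      = ∑ s', (∑ s0, ρ0 s0 * visit P μ γ (fun s'' => if s'' = s0 then 1 else 0) s') * rPol r μ s' := by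
        simp only [Finset.mul_sum, Finset.sum_mul]
        rw [Finset.sum_comm]
        exact Finset.sum_congr rfl fun s' _ => Finset.sum_congr rfl fun s0 _ => by ring
    _ = ∑ s', visit P μ γ ρ0 s' * rPol r μ s' := by
        refine Finset.sum_congr rfl fun s' _ => ?_
        rw [← visit_linear P μ hγ0 hγ1 hP hP_sum hμ hμ_sum ρ0 s']

/-- Performance difference lemma (Kakade & Langford):
`J(π') − J(π) = 𝔼_{s∼ρ_{π'}, a∼π'(·|s)}[A_π(s,a)]`. -/
theorem performance_difference
    (P : S → A → S → ℝ) (r : S → A → ℝ) (γ : ℝ) (ρ0 : S → ℝ)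
    (hγ0 : 0 ≤ γ) (hγ1 : γ < 1)
    (hP_nonneg : ∀ s a s', 0 ≤ P s a s') (hP_sum : ∀ s a, ∑ s', P s a s' = 1)
    (hρ0_nonneg : ∀ s, 0 ≤ ρ0 s) (hρ0_sum : ∑ s, ρ0 s = 1)
    (π π' : S → A → ℝ)
    (hπ_nonneg : ∀ s a, 0 ≤ π s a) (hπ_sum : ∀ s, ∑ a, π s a = 1)
    (hπ'_nonneg : ∀ s a, 0 ≤ π' s a) (hπ'_sum : ∀ s, ∑ a, π' s a = 1) :
    Jval P r π' γ ρ0 - Jval P r π γ ρ0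
      = ∑ s, visit P π' γ ρ0 s * ∑ a, π' s a * Adv P r π γ s a := by
  set V : S → ℝ := Vval P r π γ with hV
  set ρ' : S → ℝ := visit P π' γ ρ0 with hρ'
  have flow : ∀ s', γ * ∑ s, ρ' s * stepMat P π' s s' = ρ' s' - ρ0 s' := by
    intro s'
    have := visit_flow P π' hγ0 hγ1 hP_nonneg hP_sum hπ'_nonneg hπ'_sum ρ0
      hρ0_nonneg hρ0_sum s'
    rw [← hρ'] at this
    linarith
  have hkey : ∀ s, ∑ a, π' s a * Adv P r π γ s a
      = rPol r π' s + γ * (∑ s', stepMat P π' s s' * V s') - V s := by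
    intro s
    have hq : ∑ a, π' s a * Qval P r π γ s a
        = rPol r π' s + γ * ∑ s', stepMat P π' s s' * V s' := by
      unfold Qval rPol stepMat
      simp only [mul_add, Finset.sum_add_distrib, Finset.mul_sum, Finset.sum_mul]
      congr 1
      rw [Finset.sum_comm]
      exact Finset.sum_congr rfl fun s' _ => Finset.sum_congr rfl fun a _ => by ring
    have hv : ∑ a, π' s a * V s = V s := by
      rw [← Finset.sum_mul, hπ'_sum s, one_mul]
    unfold Adv
    simp only [mul_sub, Finset.sum_sub_distrib, hq, hv, ← hV]
  have middle : ∑ s, ρ' s * (γ * ∑ s', stepMat P π' s s' * V s')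
      = ∑ s', (ρ' s' - ρ0 s') * V s' := by
    calc ∑ s, ρ' s * (γ * ∑ s', stepMat P π' s s' * V s')
        = ∑ s', (γ * ∑ s, ρ' s * stepMat P π' s s') * V s' := by
          simp only [Finset.mul_sum, Finset.sum_mul]
          rw [Finset.sum_comm]
          exact Finset.sum_congr rfl fun s' _ => Finset.sum_congr rfl fun s _ => by ring
      _ = ∑ s', (ρ' s' - ρ0 s') * V s' :=
          Finset.sum_congr rfl fun s' _ => by rw [flow s']
  have hJ' : Jval P r π' γ ρ0 = ∑ s, ρ' s * rPol r π' s :=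
    Jval_alt P r π' hγ0 hγ1 hP_nonneg hP_sum hπ'_nonneg hπ'_sum ρ0
  calc Jval P r π' γ ρ0 - Jval P r π γ ρ0
      = ∑ s, ρ' s * rPol r π' s - ∑ s, ρ0 s * V s := by rw [hJ']; rfl
    _ = ∑ s, ρ' s * rPol r π' s
        + (∑ s, (ρ' s - ρ0 s) * V s - ∑ s, ρ' s * V s) := by
          simp only [sub_mul, Finset.sum_sub_distrib]
          ring
    _ = ∑ s, (ρ' s * rPol r π' s
          + ρ' s * (γ * ∑ s', stepMat P π' s s' * V s') - ρ' s * V s) := by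
          rw [← middle]
          simp only [Finset.sum_sub_distrib, Finset.sum_add_distrib]
          ring
    _ = ∑ s, ρ' s * ∑ a, π' s a * Adv P r π γ s a := by
          refine Finset.sum_congr rfl fun s _ => ?_
          rw [hkey s]; ring
end

section
/- First error-term bound in Theorem 1: under the hypotheses ‖ρ_π − ρ_{π_k}‖₁ ≤ (2γ/(1−γ))𝔼_{s∼ρ_{π_k}}[D_TV(π∥π_k)[s]] and π = (1−κ)π_k + κπ', we have |𝔼_{s∼ρ_π}[Ā_{π,π_k}(s)] − 𝔼_{s∼ρ_{π_k}}[Ā_{π,π_k}(s)]| ≤ (2κ²γ/(1−γ))·𝔸_{π',π_k}·𝔼_{s∼ρ_{π_k}}[D_TV(π'∥π_k)[s]], where Ā_{π,π_k}(s) = 𝔼_{a∼π(·|s)}[A_{π_k}(s,a)] and 𝔸_{π',π_k} = 2 max_{s,a}|A_{π_k}(s,a)|·max_s D_TV(π'∥π_k)[s]. -/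
open scoped BigOperators

/-- First error-term bound in Theorem 1: under the visitation bound and the
mixture update `π = (1−κ)π_k + κπ'`,
`|𝔼_{s∼ρ_π}[Ā_{π,π_k}(s)] − 𝔼_{s∼ρ_{π_k}}[Ā_{π,π_k}(s)]|
≤ (2κ²γ/(1−γ))·𝔸_{π',π_k}·𝔼_{s∼ρ_{π_k}}[D_TV(π'∥π_k)[s]]`, where
`Ā_{π,π_k}(s) = 𝔼_{a∼π(·|s)}[A_{π_k}(s,a)]` and
`𝔸_{π',π_k} = 2·max_{s,a}|A_{π_k}(s,a)|·max_s D_TV(π'∥π_k)[s]`. -/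
theorem first_error_term_bound
    {S A : Type*} [Fintype S] [Nonempty S] [Fintype A] [Nonempty A]
    (πk π' π : S → A → ℝ) (Adv : S → A → ℝ) (ρπ ρπk : S → ℝ) (γ κ : ℝ)
    (hγ0 : 0 ≤ γ) (hγ1 : γ < 1) (hκ0 : 0 ≤ κ) (hκ1 : κ ≤ 1)
    (hπk_nonneg : ∀ s a, 0 ≤ πk s a) (hπk_sum : ∀ s, ∑ a, πk s a = 1)
    (hπ'_nonneg : ∀ s a, 0 ≤ π' s a) (hπ'_sum : ∀ s, ∑ a, π' s a = 1)
    (hρπk_nonneg : ∀ s, 0 ≤ ρπk s)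
    (hAdv_zero : ∀ s, ∑ a, πk s a * Adv s a = 0)
    (hmix : ∀ s a, π s a = (1 - κ) * πk s a + κ * π' s a)
    (hvis : ∑ s, |ρπ s - ρπk s|
      ≤ (2 * γ / (1 - γ)) * ∑ s, ρπk s * ((1 / 2) * ∑ a, |π s a - πk s a|)) :
    |∑ s, ρπ s * (∑ a, π s a * Adv s a)
        - ∑ s, ρπk s * (∑ a, π s a * Adv s a)|
      ≤ (2 * κ ^ 2 * γ / (1 - γ))
          * (2 * (Finset.univ.sup' Finset.univ_nonempty
                    (fun p : S × A => |Adv p.1 p.2|))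
              * Finset.univ.sup' Finset.univ_nonempty
                  (fun s => (1 / 2) * ∑ a, |π' s a - πk s a|))
          * ∑ s, ρπk s * ((1 / 2) * ∑ a, |π' s a - πk s a|) := by
  set M := Finset.univ.sup' Finset.univ_nonempty (fun p : S × A => |Adv p.1 p.2|) with hM
  set T := Finset.univ.sup' Finset.univ_nonempty
      (fun s : S => (1 / 2) * ∑ a, |π' s a - πk s a|) with hT
  have hγ' : 0 < 1 - γ := by linarith
  have hMnn : 0 ≤ M := le_trans (abs_nonneg _)
    (Finset.le_sup' (fun p : S × A => |Adv p.1 p.2|) (Finset.mem_univ (Classical.arbitrary _)))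
  have hTnn : 0 ≤ T := by
    refine le_trans ?_ (Finset.le_sup' (fun s : S => (1 / 2) * ∑ a, |π' s a - πk s a|)
      (Finset.mem_univ (Classical.arbitrary _)))
    positivity
  -- rewrite Ā in terms of π'
  have hA : ∀ s, ∑ a, π s a * Adv s a = κ * ∑ a, (π' s a - πk s a) * Adv s a := by
    intro s
    have h1 : ∑ a, π s a * Adv s a
        = (1 - κ) * ∑ a, πk s a * Adv s a + κ * ∑ a, π' s a * Adv s a := by
      rw [Finset.mul_sum, Finset.mul_sum, ← Finset.sum_add_distrib]
      exact Finset.sum_congr rfl fun a _ => by rw [hmix]; ring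
    have h2 : ∑ a, (π' s a - πk s a) * Adv s a
        = ∑ a, π' s a * Adv s a - ∑ a, πk s a * Adv s a := by
      rw [← Finset.sum_sub_distrib]
      exact Finset.sum_congr rfl fun a _ => by ring
    rw [h1, h2, hAdv_zero s]; ring
  -- the TV terms rewrite
  have hTV : ∀ s, (1 / 2) * ∑ a, |π s a - πk s a| = κ * ((1 / 2) * ∑ a, |π' s a - πk s a|) := by
    intro s
    have : ∀ a, |π s a - πk s a| = κ * |π' s a - πk s a| := by
      intro a
      rw [hmix, show (1 - κ) * πk s a + κ * π' s a - πk s a = κ * (π' s a - πk s a) by ring,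
        abs_mul, abs_of_nonneg hκ0]
    simp only [this, ← Finset.mul_sum]; ring
  -- uniform bound on Ā
  have hAb : ∀ s, |∑ a, π s a * Adv s a| ≤ κ * (2 * M * T) := by
    intro s
    rw [hA, abs_mul, abs_of_nonneg hκ0]
    refine mul_le_mul_of_nonneg_left ?_ hκ0
    calc |∑ a, (π' s a - πk s a) * Adv s a|
        ≤ ∑ a, |(π' s a - πk s a) * Adv s a| := Finset.abs_sum_le_sum_abs _ _
      _ ≤ ∑ a, |π' s a - πk s a| * M := by
          refine Finset.sum_le_sum fun a _ => ?_
          rw [abs_mul]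
          exact mul_le_mul_of_nonneg_left
            (Finset.le_sup' (fun p : S × A => |Adv p.1 p.2|) (Finset.mem_univ (s, a)))
            (abs_nonneg _)
      _ = 2 * M * ((1 / 2) * ∑ a, |π' s a - πk s a|) := by
          rw [← Finset.sum_mul]; ring
      _ ≤ 2 * M * T := by
          refine mul_le_mul_of_nonneg_left ?_ (by positivity)
          exact Finset.le_sup' (fun s : S => (1 / 2) * ∑ a, |π' s a - πk s a|)
            (Finset.mem_univ s)
  -- main estimate
  have key : |∑ s, ρπ s * (∑ a, π s a * Adv s a) - ∑ s, ρπk s * (∑ a, π s a * Adv s a)|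
      ≤ (∑ s, |ρπ s - ρπk s|) * (κ * (2 * M * T)) := by
    rw [← Finset.sum_sub_distrib]
    calc |∑ s, (ρπ s * (∑ a, π s a * Adv s a) - ρπk s * (∑ a, π s a * Adv s a))|
        ≤ ∑ s, |ρπ s * (∑ a, π s a * Adv s a) - ρπk s * (∑ a, π s a * Adv s a)| :=
          Finset.abs_sum_le_sum_abs _ _
      _ ≤ ∑ s, |ρπ s - ρπk s| * (κ * (2 * M * T)) := by
          refine Finset.sum_le_sum fun s _ => ?_
          rw [← sub_mul, abs_mul]
          exact mul_le_mul_of_nonneg_left (hAb s) (abs_nonneg _)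
      _ = (∑ s, |ρπ s - ρπk s|) * (κ * (2 * M * T)) := by rw [Finset.sum_mul]
  have hvis' : ∑ s, |ρπ s - ρπk s|
      ≤ (2 * γ / (1 - γ)) * (κ * ∑ s, ρπk s * ((1 / 2) * ∑ a, |π' s a - πk s a|)) := by
    calc ∑ s, |ρπ s - ρπk s|
        ≤ (2 * γ / (1 - γ)) * ∑ s, ρπk s * ((1 / 2) * ∑ a, |π s a - πk s a|) := hvis
      _ = (2 * γ / (1 - γ)) * (κ * ∑ s, ρπk s * ((1 / 2) * ∑ a, |π' s a - πk s a|)) := by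
          have h : ∀ s : S, ρπk s * ((1 / 2) * ∑ a, |π s a - πk s a|)
              = κ * (ρπk s * ((1 / 2) * ∑ a, |π' s a - πk s a|)) := fun s => by
            rw [hTV]; ring
          rw [Finset.sum_congr rfl fun s _ => h s, ← Finset.mul_sum]
  calc |∑ s, ρπ s * (∑ a, π s a * Adv s a) - ∑ s, ρπk s * (∑ a, π s a * Adv s a)|
      ≤ (∑ s, |ρπ s - ρπk s|) * (κ * (2 * M * T)) := key
    _ ≤ ((2 * γ / (1 - γ)) * (κ * ∑ s, ρπk s * ((1 / 2) * ∑ a, |π' s a - πk s a|)))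
          * (κ * (2 * M * T)) := by
        refine mul_le_mul_of_nonneg_right hvis' ?_
        positivity
    _ = (2 * κ ^ 2 * γ / (1 - γ)) * (2 * M * T)
          * ∑ s, ρπk s * ((1 / 2) * ∑ a, |π' s a - πk s a|) := by
        field_simp
end
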